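/- The generalized hypergeometric series ₃F₂(1, 1, 3/2; 5/3, 13/6; 1) equals 28/3 + 7·2^{1/3}·π/(9√3) − 14·2^{1/3}·arctan((1 + 2^{2/3})/√3)/(3√3) + (14/9)·2^{1/3}·ln(2 − 2^{2/3}) − (7/9)·2^{1/3}·ln(2·(2 + 2^{1/3} + 2^{2/3})). -/

import Mathlib

/-!
The `n`-th term of the series is `7 (2n + 1) ∫₀¹ v⁶ (1 - v³)^(2n) dv`: both sides equal `1` at
`n = 0` and have the same ratio of consecutive terms, the right-hand side by the integration by
parts recursion of the Beta-type integrals `∫₀¹ vᵖ (1 - vᵏ)ᵐ dv`. Summing under the integral sign,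
`∑ (2n + 1) qⁿ = (1 + q) / (1 - q)²` with `q = (1 - v³)²` turns the series into
`∫₀¹ 7 (1 + (1 - v³)²) / (2 - v³)² dv`, an elementary integral: with `c = 2^(1/3)` it reduces
to `∫ dv / (c³ - v³)`, computed by partial fractions over `c³ - v³ = (c - v) (v² + c v + c²)`.
-/

open Real

noncomputable def poch (a : ℝ) (n : ℕ) : ℝ := Polynomial.eval a (ascPochhammer ℝ n)

open MeasureTheory Set
open scoped Interval

lemma poch_zero (a : ℝ) : poch a 0 = 1 := by simp [poch]

lemma poch_succ (a : ℝ) (n : ℕ) : poch a (n + 1) = poch a n * (a + n) :=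
  ascPochhammer_succ_eval n a

noncomputable def hypergeometricTerm₃₂ (a₁ a₂ a₃ b₁ b₂ : ℝ) (n : ℕ) : ℝ :=
  poch a₁ n * poch a₂ n * poch a₃ n / (poch b₁ n * poch b₂ n * (Nat.factorial n : ℝ))

lemma hypergeometricTerm₃₂_zero (a₁ a₂ a₃ b₁ b₂ : ℝ) :
    hypergeometricTerm₃₂ a₁ a₂ a₃ b₁ b₂ 0 = 1 := by
  simp [hypergeometricTerm₃₂, poch_zero]

lemma hypergeometricTerm₃₂_succ (a₁ a₂ a₃ b₁ b₂ : ℝ) (n : ℕ) :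
    hypergeometricTerm₃₂ a₁ a₂ a₃ b₁ b₂ (n + 1) = hypergeometricTerm₃₂ a₁ a₂ a₃ b₁ b₂ n *
      ((a₁ + n) * (a₂ + n) * (a₃ + n) / ((b₁ + n) * (b₂ + n) * (n + 1))) := by
  simp only [hypergeometricTerm₃₂, poch_succ, Nat.factorial_succ, Nat.cast_mul, Nat.cast_succ]
  rw [div_mul_div_comm]
  congr 1 <;> ring

lemma integral_pow_mul_one_sub_pow_succ (p k m : ℕ) :
    (p + 1 + k * (m + 1) : ℝ) * ∫ v in (0 : ℝ)..1, v ^ p * (1 - v ^ k) ^ (m + 1)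
      = k * (m + 1) * ∫ v in (0 : ℝ)..1, v ^ p * (1 - v ^ k) ^ m := by
  -- the boundary term `v ^ (p + 1) * (1 - v ^ k) ^ (m + 1)` vanishes at both ends
  have hderiv : ∀ v : ℝ, HasDerivAt (fun v : ℝ => v ^ (p + 1) * (1 - v ^ k) ^ (m + 1))
      ((p + 1 + k * (m + 1)) * (v ^ p * (1 - v ^ k) ^ (m + 1))
        - k * (m + 1) * (v ^ p * (1 - v ^ k) ^ m)) v := by
    intro v
    refine (((hasDerivAt_pow (p + 1) v).mul
      (((hasDerivAt_pow k v).const_sub 1).pow (m + 1)))).congr_deriv ?_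
    simp only [Pi.pow_apply]
    rcases k with _ | k
    · simp
    · push_cast
      ring
  have hint : ∀ j : ℕ, IntervalIntegrable (fun v : ℝ => v ^ p * (1 - v ^ k) ^ j) volume 0 1 :=
    fun j => (by fun_prop : Continuous fun v : ℝ => v ^ p * (1 - v ^ k) ^ j).intervalIntegrable _ _
  have hftc := intervalIntegral.integral_eq_sub_of_hasDerivAt (fun v _ => hderiv v)
    (((hint (m + 1)).const_mul _).sub ((hint m).const_mul _))
  rw [intervalIntegral.integral_sub ((hint (m + 1)).const_mul _) ((hint m).const_mul _),
    intervalIntegral.integral_const_mul, intervalIntegral.integral_const_mul] at hftc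
  simp only [one_pow, sub_self, ne_eq, Nat.add_eq_zero_iff, one_ne_zero, and_false,
    not_false_eq_true, zero_pow, mul_zero, zero_mul] at hftc
  linarith

lemma hypergeometricTerm₃₂_eq_integral (n : ℕ) :
    hypergeometricTerm₃₂ 1 1 (3 / 2) (5 / 3) (13 / 6) n
      = ∫ v in (0 : ℝ)..1, 7 * (2 * n + 1) * (v ^ 6 * (1 - v ^ 3) ^ (2 * n)) := by
  induction n with
  | zero => norm_num [hypergeometricTerm₃₂_zero]
  | succ n ih =>
    rw [hypergeometricTerm₃₂_succ, ih, intervalIntegral.integral_const_mul,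
      intervalIntegral.integral_const_mul, show 2 * (n + 1) = 2 * n + 1 + 1 by ring]
    have h₁ := integral_pow_mul_one_sub_pow_succ 6 3 (2 * n)
    have h₂ := integral_pow_mul_one_sub_pow_succ 6 3 (2 * n + 1)
    set x := ∫ v in (0 : ℝ)..1, v ^ 6 * (1 - v ^ 3) ^ (2 * n)
    set y := ∫ v in (0 : ℝ)..1, v ^ 6 * (1 - v ^ 3) ^ (2 * n + 1)
    set z := ∫ v in (0 : ℝ)..1, v ^ 6 * (1 - v ^ 3) ^ (2 * n + 1 + 1)
    push_cast at h₁ h₂ ⊢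
    have hz : z = 9 * (2 * n + 1) * (2 * n + 2) * x / ((6 * n + 10) * (6 * n + 13)) := by
      field_simp
      linear_combination (6 * (n : ℝ) + 10) * h₂ + 3 * (2 * (n : ℝ) + 2) * h₁
    rw [hz]
    field_simp
    ring

lemma hasSum_two_mul_add_one_mul_geometric {𝕜 : Type*} [NormedField 𝕜] {q : 𝕜} (hq : ‖q‖ < 1) :
    HasSum (fun n : ℕ => (2 * n + 1) * q ^ n) ((1 + q) / (1 - q) ^ 2) := by
  have hq₁ : 1 - q ≠ 0 := sub_ne_zero.mpr (fun h => by simp [← h] at hq)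
  have hsum := ((hasSum_coe_mul_geometric_of_norm_lt_one hq).mul_left 2).add
    (hasSum_geometric_of_norm_lt_one hq)
  rw [show (1 + q) / (1 - q) ^ 2 = 2 * (q / (1 - q) ^ 2) + (1 - q)⁻¹ by field_simp; ring]
  exact hsum.congr_fun fun n => by ring

lemma hasSum_intervalIntegral_of_nonneg {μ : Measure ℝ} {a b : ℝ} {F : ℕ → ℝ → ℝ} {f : ℝ → ℝ}
    (hF_meas : ∀ n, AEStronglyMeasurable (F n) (μ.restrict (Ι a b)))
    (hF_nonneg : ∀ n, ∀ t ∈ Ι a b, 0 ≤ F n t) (hf : IntervalIntegrable f μ a b)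
    (h_lim : ∀ t ∈ Ι a b, HasSum (fun n => F n t) (f t)) :
    HasSum (fun n => ∫ t in a..b, F n t ∂μ) (∫ t in a..b, f t ∂μ) :=
  intervalIntegral.hasSum_integral_of_dominated_convergence F hF_meas
    (fun n => ae_of_all _ fun t ht => (Real.norm_of_nonneg (hF_nonneg n t ht)).le)
    (ae_of_all _ fun t ht => (h_lim t ht).summable)
    (hf.congr fun t ht => ((h_lim t ht).tsum_eq).symm)
    (ae_of_all _ h_lim)

noncomputable def seriesIntegrand (v : ℝ) : ℝ := 7 * (1 + (1 - v ^ 3) ^ 2) / (2 - v ^ 3) ^ 2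

lemma hasSum_seriesIntegrand {v : ℝ} (hv : v ∈ Ioc 0 1) :
    HasSum (fun n : ℕ => 7 * (2 * n + 1) * (v ^ 6 * (1 - v ^ 3) ^ (2 * n)))
      (seriesIntegrand v) := by
  obtain ⟨hv₀, hv₁⟩ := hv
  have hv₃ : 0 < v ^ 3 := by positivity
  have hq : ‖(1 - v ^ 3) ^ 2‖ < 1 := by
    rw [Real.norm_eq_abs, abs_of_nonneg (sq_nonneg _)]
    nlinarith [pow_le_one₀ hv₀.le hv₁ (n := 3)]
  have h₂ : 2 - v ^ 3 ≠ 0 := by nlinarith [pow_le_one₀ hv₀.le hv₁ (n := 3)]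
  have hsum := (hasSum_two_mul_add_one_mul_geometric hq).mul_left (7 * v ^ 6)
  rw [seriesIntegrand, show 7 * (1 + (1 - v ^ 3) ^ 2) / (2 - v ^ 3) ^ 2
      = 7 * v ^ 6 * ((1 + (1 - v ^ 3) ^ 2) / (1 - (1 - v ^ 3) ^ 2) ^ 2) by
        rw [show 1 - (1 - v ^ 3) ^ 2 = v ^ 3 * (2 - v ^ 3) by ring]; field_simp]
  exact hsum.congr_fun fun n => by rw [pow_mul]; ring

noncomputable def invCubeSubPrimitive (c v : ℝ) : ℝ :=
  (log (v ^ 2 + c * v + c ^ 2) - 2 * log (c - v)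
    + 2 * √3 * arctan ((2 * v + c) / (c * √3))) / (6 * c ^ 2)

lemma hasDerivAt_invCubeSubPrimitive {c v : ℝ} (hc : 0 < c) (hv : v < c) :
    HasDerivAt (invCubeSubPrimitive c) (c ^ 3 - v ^ 3)⁻¹ v := by
  have hcv : 0 < c - v := sub_pos.mpr hv
  have hq : 0 < v ^ 2 + c * v + c ^ 2 := by nlinarith [sq_nonneg (2 * v + c)]
  have hs2 : √3 ^ 2 = 3 := Real.sq_sqrt (by norm_num)
  have hquad : HasDerivAt (fun v : ℝ => v ^ 2 + c * v + c ^ 2) (2 * v + c) v := by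
    simpa using (((hasDerivAt_pow 2 v).add ((hasDerivAt_id v).const_mul c)).add_const (c ^ 2))
  have hlin : HasDerivAt (fun v : ℝ => c - v) (-1) v := by
    simpa using (hasDerivAt_id v).const_sub c
  have harg : HasDerivAt (fun v : ℝ => (2 * v + c) / (c * √3)) (2 / (c * √3)) v := by
    simpa using (((hasDerivAt_id v).const_mul 2).add_const c).div_const (c * √3)
  refine ((((hquad.log hq.ne').sub ((hlin.log hcv.ne').const_mul 2)).add
    (harg.arctan.const_mul (2 * √3))).div_const (6 * c ^ 2)).congr_deriv ?_
  have h₃ : c ^ 3 - v ^ 3 = (c - v) * (v ^ 2 + c * v + c ^ 2) := by ring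
  have hq' : v * (v + c) + c ^ 2 ≠ 0 := by linarith
  rw [h₃]
  field_simp
  rw [hs2]
  ring

lemma two_sub_pow_three_ne_zero {v : ℝ} (hv : v ∈ uIcc 0 1) : 2 - v ^ 3 ≠ 0 := by
  rw [uIcc_of_le zero_le_one] at hv
  nlinarith [pow_le_one₀ hv.1 hv.2 (n := 3)]

lemma intervalIntegrable_seriesIntegrand : IntervalIntegrable seriesIntegrand volume 0 1 :=
  (ContinuousOn.div (by fun_prop) (by fun_prop)
    fun _ hv => pow_ne_zero 2 (two_sub_pow_three_ne_zero hv)).intervalIntegrable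

lemma integral_seriesIntegrand_eq_primitive {c : ℝ} (hc : c ^ 3 = 2) :
    ∫ v in (0 : ℝ)..1, seriesIntegrand v
      = 28 / 3 - 28 / 3 * (invCubeSubPrimitive c 1 - invCubeSubPrimitive c 0) := by
  have hc₀ : 0 < c := (Odd.pow_pos_iff (n := 3) (by decide)).mp (by rw [hc]; norm_num)
  have hc₁ : 1 < c := lt_of_pow_lt_pow_left₀ 3 hc₀.le (by rw [hc]; norm_num)
  -- `7 (1 + (1 - v³)²) / (2 - v³)² = 7 + (7/3) d/dv (v / (2 - v³)) - (28/3) / (2 - v³)`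
  have hderiv : ∀ v ∈ uIcc (0 : ℝ) 1, HasDerivAt
      (fun v => 7 * v + 7 / 3 * (v / (2 - v ^ 3)) - 28 / 3 * invCubeSubPrimitive c v)
      (seriesIntegrand v) v := by
    intro v hv
    have hv₂ := two_sub_pow_three_ne_zero hv
    have hvc : v < c := by
      rw [uIcc_of_le zero_le_one] at hv
      linarith [hv.2]
    have hrat : HasDerivAt (fun v : ℝ => v / (2 - v ^ 3))
        ((2 + 2 * v ^ 3) / (2 - v ^ 3) ^ 2) v := by
      refine ((hasDerivAt_id v).div ((hasDerivAt_pow 3 v).const_sub 2) hv₂).congr_deriv ?_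
      simp only [id]
      field_simp
      ring
    have hP := hasDerivAt_invCubeSubPrimitive hc₀ hvc
    rw [hc] at hP
    refine ((((hasDerivAt_id v).const_mul 7).add (hrat.const_mul (7 / 3))).sub
      (hP.const_mul (28 / 3))).congr_deriv ?_
    rw [seriesIntegrand]
    field_simp
    ring
  rw [intervalIntegral.integral_eq_sub_of_hasDerivAt hderiv intervalIntegrable_seriesIntegrand]
  norm_num
  ring

lemma two_rpow_one_third_pow_three : ((2 : ℝ) ^ ((1 : ℝ) / 3)) ^ 3 = 2 := by
  rw [← Real.rpow_natCast, ← Real.rpow_mul zero_le_two]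
  norm_num

lemma integral_seriesIntegrand :
    ∫ v in (0 : ℝ)..1, seriesIntegrand v
      = 28/3 + 7 * (2:ℝ) ^ ((1:ℝ)/3) * Real.pi / (9 * Real.sqrt 3)
        - 14 * (2:ℝ) ^ ((1:ℝ)/3)
            * Real.arctan ((1 + (2:ℝ) ^ ((2:ℝ)/3)) / Real.sqrt 3) / (3 * Real.sqrt 3)
        + 14/9 * (2:ℝ) ^ ((1:ℝ)/3) * Real.log (2 - (2:ℝ) ^ ((2:ℝ)/3))
        - 7/9 * (2:ℝ) ^ ((1:ℝ)/3)
            * Real.log (2 * (2 + (2:ℝ) ^ ((1:ℝ)/3) + (2:ℝ) ^ ((2:ℝ)/3))) := by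
  have hc₂ : (2 : ℝ) ^ ((2 : ℝ) / 3) = ((2 : ℝ) ^ ((1 : ℝ) / 3)) ^ 2 := by
    rw [← Real.rpow_natCast, ← Real.rpow_mul zero_le_two]
    norm_num
  rw [integral_seriesIntegrand_eq_primitive two_rpow_one_third_pow_three, hc₂]
  set c : ℝ := (2 : ℝ) ^ ((1 : ℝ) / 3)
  have hc₃ : c ^ 3 = 2 := two_rpow_one_third_pow_three
  have hc₀ : 0 < c := by positivity
  have hc₁ : 0 < c - 1 := by
    linarith [lt_of_pow_lt_pow_left₀ 3 hc₀.le (show (1 : ℝ) ^ 3 < c ^ 3 by rw [hc₃]; norm_num)]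
  have hs : √3 ^ 2 = 3 := Real.sq_sqrt (by norm_num)
  -- all logarithms reduce to `log c` and `log (c - 1)` through `c³ = 2`
  have hlog₁ : log (1 ^ 2 + c * 1 + c ^ 2) = -log (c - 1) := by
    rw [eq_neg_iff_add_eq_zero, ← Real.log_mul (by positivity) hc₁.ne',
      show (1 ^ 2 + c * 1 + c ^ 2) * (c - 1) = 1 by linear_combination hc₃, Real.log_one]
  have hlog₂ : log (2 - c ^ 2) = 2 * log c + log (c - 1) := by
    rw [show 2 - c ^ 2 = c ^ 2 * (c - 1) by linear_combination -hc₃,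
      Real.log_mul (by positivity) hc₁.ne', Real.log_pow]
    push_cast; ring
  have hlog₃ : log (2 * (2 + c + c ^ 2)) = 4 * log c - log (c - 1) := by
    rw [show 2 * (2 + c + c ^ 2) = c ^ 4 / (c - 1) by
        field_simp; linear_combination (2 - c) * hc₃,
      Real.log_div (by positivity) hc₁.ne', Real.log_pow]
    push_cast; ring
  have harg : (2 * 1 + c) / (c * √3) = (1 + c ^ 2) / √3 := by
    field_simp
    linear_combination -hc₃
  have harg₀ : (2 * 0 + c) / (c * √3) = (√3)⁻¹ := by
    rw [mul_zero, zero_add, div_mul_cancel_left₀ hc₀.ne']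
  simp only [invCubeSubPrimitive, harg, harg₀, Real.arctan_inv_sqrt_three, hlog₁, hlog₂, hlog₃]
  simp only [mul_zero, zero_add, sub_zero, zero_pow two_ne_zero, Real.log_pow]
  field_simp
  linear_combination 252 * ((18 * arctan ((1 + c ^ 2) / √3) - 9 * √3 * log (c - 1) - 3 * π) * hc₃
    + (2 * π - 12 * arctan ((1 + c ^ 2) / √3)) * hs)

lemma hasSum_hypergeometricTerm₃₂ :
    HasSum (hypergeometricTerm₃₂ 1 1 (3 / 2) (5 / 3) (13 / 6))
      (∫ v in (0 : ℝ)..1, seriesIntegrand v) := by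
  refine (hasSum_intervalIntegral_of_nonneg
    (fun n => Continuous.aestronglyMeasurable (by fun_prop))
    (fun n v hv => ?_) intervalIntegrable_seriesIntegrand
    (fun v hv => hasSum_seriesIntegrand ?_)).congr_fun hypergeometricTerm₃₂_eq_integral
  · rw [uIoc_of_le zero_le_one] at hv
    have : 0 ≤ 1 - v ^ 3 := sub_nonneg.mpr (pow_le_one₀ hv.1.le hv.2)
    positivity
  · rwa [uIoc_of_le zero_le_one] at hv

theorem stmt_10 :
    ∑' n : ℕ, (poch (1) n * poch (1) n * poch (3/2) n) / (poch (5/3) n * poch (13/6) n * (Nat.factorial n : ℝ)) * (1 : ℝ) ^ n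
      = 28/3 + 7 * (2:ℝ) ^ ((1:ℝ)/3) * Real.pi / (9 * Real.sqrt 3)
        - 14 * (2:ℝ) ^ ((1:ℝ)/3)
            * Real.arctan ((1 + (2:ℝ) ^ ((2:ℝ)/3)) / Real.sqrt 3) / (3 * Real.sqrt 3)
        + 14/9 * (2:ℝ) ^ ((1:ℝ)/3) * Real.log (2 - (2:ℝ) ^ ((2:ℝ)/3))
        - 7/9 * (2:ℝ) ^ ((1:ℝ)/3)
            * Real.log (2 * (2 + (2:ℝ) ^ ((1:ℝ)/3) + (2:ℝ) ^ ((2:ℝ)/3))) := by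
  simp_rw [one_pow, mul_one]
  rw [← integral_seriesIntegrand]
  exact hasSum_hypergeometricTerm₃₂.tsum_eq
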